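/- arXiv:1104.5428 — 4 statements merged into one kernel-verified Lean document; each statement's English description precedes it below -/
import Mathlib

section
/- Let A be an n×n complex matrix and B an n×m complex matrix. There exists an m×n complex matrix K such that A − BK is nilpotent ((A − BK)ⁿ = 0) if and only if for every nonzero complex scalar λ there is no nonzero vector w ∈ ℂⁿ with wᵀA = λwᵀ and wᵀB = 0 (the Popov–Belevitch–Hautus test: rank[A − λI, B] = n for all λ ≠ 0). -/
/-!
Let `N k` be the states that can be steered to `0` in `k` steps, so that
`f (N (k + 1)) ⊆ N k + range b`. Choosing inputs linearly on a complement of `N j`, one level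
at a time, gives a gain `g` with `(f - b g) (N (j + 1)) ⊆ N j`; hence
`f - b g` is nilpotent as soon as some `N r` is the whole space.

This happens under the PBH condition. Let `R` be the reachable subspace, the smallest
`f`-invariant subspace containing `range b`. An eigenvector of the transpose of `f` on the
annihilator of `R` is a left eigenvector of `f` killing `range b`, so that transpose has only the
eigenvalue `0` and is nilpotent: `f ^ d` maps everything into `R`. Since states in `R` can be
steered to `0`, every state can.

Conversely, a left eigenvector `w` of `f` with `w b = 0` is one of `f - b g` with the same
eigenvalue, which must then be `0` if `f - b g` is nilpotent.
-/

open Module LinearMap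

lemma LinearMap.dualMap_pow_apply {K V : Type*} [Field K] [AddCommGroup V] [Module K V]
    (f : V →ₗ[K] V) (k : ℕ) (w : Dual K V) : (f.dualMap ^ k) w = w ∘ₗ f ^ k := by
  induction k with
  | zero => rfl
  | succ k ih => rw [pow_succ', Module.End.mul_apply, ih, pow_succ]; rfl

lemma Module.End.isNilpotent_of_forall_hasEigenvalue {K V : Type*} [Field K] [IsAlgClosed K]
    [AddCommGroup V] [Module K V] [FiniteDimensional K V] (f : Module.End K V)
    (h : ∀ μ, f.HasEigenvalue μ → μ = 0) : IsNilpotent f := by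
  have htop : f.maxGenEigenspace 0 = ⊤ := by
    refine eq_top_iff.mpr (f.iSup_maxGenEigenspace_eq_top.symm.le.trans (iSup_le fun μ => ?_))
    by_cases hμ : μ = 0
    · rw [hμ]
    · refine le_of_eq_of_le ?_ bot_le
      by_contra hne
      exact hμ (h μ (Module.End.HasUnifEigenvalue.lt zero_lt_one hne))
  refine ((f.charpoly_nilpotent_tfae).out 0 2).mpr fun x => ?_
  obtain ⟨k, hk⟩ := (f.mem_maxGenEigenspace 0 x).mp (htop ▸ Submodule.mem_top)
  exact ⟨k, by simpa using hk⟩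

namespace LinearControl

variable {K V U : Type*} [Field K] [AddCommGroup V] [Module K V] [AddCommGroup U] [Module K U]
  (f : V →ₗ[K] V) (b : U →ₗ[K] V)

lemma exists_forall_sub_mem_of_map_le {P Q : Submodule K V} (hQ : Q.map f ≤ P ⊔ range b) :
    ∃ k : V →ₗ[K] U, ∀ x ∈ Q, f x - b (k x) ∈ P := by
  set β := P.mkQ ∘ₗ b
  have hφ : ∀ x : Q, (P.mkQ ∘ₗ f ∘ₗ Q.subtype) x ∈ range β := by
    intro x
    obtain ⟨p, hp, _, ⟨u, rfl⟩, hpu⟩ := Submodule.mem_sup.mp (hQ (Submodule.mem_map_of_mem x.2))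
    refine ⟨u, ?_⟩
    simp [β, ← hpu, (Submodule.Quotient.mk_eq_zero P).mpr hp]
  obtain ⟨k₀, hk₀⟩ := Module.projective_lifting_property β.rangeRestrict
    ((P.mkQ ∘ₗ f ∘ₗ Q.subtype).codRestrict (range β) hφ) β.surjective_rangeRestrict
  obtain ⟨k, hk⟩ := LinearMap.exists_extend k₀
  refine ⟨k, fun x hx => ?_⟩
  have h := congr(($hk₀ ⟨x, hx⟩ : V ⧸ P))
  rw [← hk] at h
  rw [← Submodule.Quotient.eq]
  simpa [β] using h.symm

lemma exists_feedback_extend {P Q : Submodule K V} (hPQ : P ≤ Q) (hQ : Q.map f ≤ P ⊔ range b)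
    (g : V →ₗ[K] U) (hg : P.map (f - b ∘ₗ g) ≤ P) :
    ∃ g' : V →ₗ[K] U, (∀ x ∈ P, g' x = g x) ∧ Q.map (f - b ∘ₗ g') ≤ P := by
  obtain ⟨k, hk⟩ := exists_forall_sub_mem_of_map_le f b hQ
  obtain ⟨C, hPC⟩ := P.exists_isCompl
  set g' := ofIsCompl hPC (g ∘ₗ P.subtype) (k ∘ₗ C.subtype)
  have hg'P : ∀ x ∈ P, g' x = g x := fun x hx => ofIsCompl_apply_left hPC ⟨x, hx⟩
  have hg'C : ∀ x ∈ C, g' x = k x := fun x hx => ofIsCompl_apply_right hPC ⟨x, hx⟩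
  refine ⟨g', hg'P, ?_⟩
  rintro _ ⟨x, hx, rfl⟩
  obtain ⟨p, hp, c, hc, rfl⟩ := Submodule.mem_sup.mp (hPC.sup_eq_top ▸ Submodule.mem_top (x := x))
  have hcQ : c ∈ Q := by simpa using Q.sub_mem hx (hPQ hp)
  convert P.add_mem (hg ⟨p, hp, rfl⟩) (hk c hcQ) using 1
  simp only [LinearMap.sub_apply, LinearMap.comp_apply, map_add, hg'P p hp, hg'C c hc]

lemma exists_feedback_of_chain {N : ℕ → Submodule K V} (hN0 : N 0 = ⊥) (hN : Monotone N)
    (hstep : ∀ j, (N (j + 1)).map f ≤ N j ⊔ range b) (r : ℕ) :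
    ∃ g : V →ₗ[K] U, ∀ j < r, (N (j + 1)).map (f - b ∘ₗ g) ≤ N j := by
  induction r with
  | zero => exact ⟨0, by simp⟩
  | succ r ih =>
    obtain ⟨g, hg⟩ := ih
    have hgr : (N r).map (f - b ∘ₗ g) ≤ N r := by
      cases r with
      | zero => simp [hN0]
      | succ r => exact (hg r r.lt_succ_self).trans (hN r.le_succ)
    obtain ⟨g', hg'g, hg'⟩ := exists_feedback_extend f b (hN r.le_succ) (hstep r) g hgr
    refine ⟨g', fun j hj => ?_⟩
    rcases Nat.lt_succ_iff_lt_or_eq.mp hj with hj | rfl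
    · rintro _ ⟨x, hx, rfl⟩
      simpa [hg'g x (hN hj hx)] using hg j hj ⟨x, hx, rfl⟩
    · exact hg'

lemma pow_apply_eq_zero_of_map_le {h : Module.End K V} {N : ℕ → Submodule K V} (hN0 : N 0 = ⊥)
    {r : ℕ} (hN : ∀ j < r, (N (j + 1)).map h ≤ N j) : ∀ j ≤ r, ∀ x ∈ N j, (h ^ j) x = 0 := by
  intro j
  induction j with
  | zero => simp [hN0]
  | succ j ih =>
    intro hj x hx
    rw [pow_succ, Module.End.mul_apply]
    exact ih (by omega) _ (hN j hj ⟨x, hx, rfl⟩)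

theorem exists_isNilpotent_sub_comp_of_chain {N : ℕ → Submodule K V} (hN0 : N 0 = ⊥)
    (hN : Monotone N) (hstep : ∀ j, (N (j + 1)).map f ≤ N j ⊔ range b) {r : ℕ} (hr : N r = ⊤) :
    ∃ g : V →ₗ[K] U, IsNilpotent (f - b ∘ₗ g) := by
  obtain ⟨g, hg⟩ := exists_feedback_of_chain f b hN0 hN hstep r
  exact ⟨g, r, LinearMap.ext fun x =>
    pow_apply_eq_zero_of_map_le hN0 hg r le_rfl x (hr ▸ Submodule.mem_top)⟩

section Reachability

def reachable : ℕ → Submodule K V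
  | 0 => ⊥
  | k + 1 => reachable k ⊔ range ((f ^ k) ∘ₗ b)

-- The states that some input sequence steers to `0` in `k` steps.
def nullControllable (k : ℕ) : Submodule K V :=
  (reachable f b k).comap (f ^ k)

lemma reachable_mono : Monotone (reachable f b) :=
  monotone_nat_of_le_succ fun _ => le_sup_left

lemma range_le_reachable_one : range b ≤ reachable f b 1 := by
  simp [reachable, Module.End.one_eq_id]

lemma map_reachable_le (k : ℕ) : (reachable f b k).map f ≤ reachable f b (k + 1) := by
  induction k with
  | zero => simp [reachable]
  | succ k ih =>
    rw [reachable, Submodule.map_sup]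
    refine sup_le (ih.trans (reachable_mono f b (k + 1).le_succ)) ?_
    rw [← range_comp, ← comp_assoc, ← Module.End.mul_eq_comp, ← pow_succ']
    exact le_sup_right

lemma nullControllable_zero : nullControllable f b 0 = ⊥ := by
  simp [nullControllable, reachable, Module.End.one_eq_id]

lemma nullControllable_mono : Monotone (nullControllable f b) := by
  refine monotone_nat_of_le_succ fun k x hx => ?_
  rw [nullControllable, Submodule.mem_comap, pow_succ', Module.End.mul_apply]
  exact map_reachable_le f b k ⟨_, hx, rfl⟩

lemma map_nullControllable_succ_le (k : ℕ) :
    (nullControllable f b (k + 1)).map f ≤ nullControllable f b k ⊔ range b := by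
  rintro _ ⟨x, hx, rfl⟩
  obtain ⟨v, hv, _, ⟨u, rfl⟩, hvu⟩ := Submodule.mem_sup.mp hx
  refine Submodule.mem_sup.mpr ⟨f x - b u, ?_, b u, ⟨u, rfl⟩, sub_add_cancel _ _⟩
  rw [nullControllable, Submodule.mem_comap, map_sub, ← Module.End.mul_apply, ← pow_succ]
  simpa [← hvu] using hv

lemma exists_reachable_stable [IsNoetherian K V] :
    ∃ s, ∀ t, s ≤ t → reachable f b s = reachable f b t :=
  WellFoundedGT.monotone_chain_condition ⟨reachable f b, reachable_mono f b⟩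

end Reachability

section Modes

-- `μ` fails the PBH test: some left eigenvector of `f` for `μ` annihilates the range of `b`.
def IsUncontrollableMode (μ : K) : Prop :=
  ∃ w : Dual K V, w ≠ 0 ∧ w ∘ₗ f = μ • w ∧ w ∘ₗ b = 0

lemma not_isUncontrollableMode_of_isNilpotent {g : V →ₗ[K] U} (hg : IsNilpotent (f - b ∘ₗ g))
    {μ : K} (hμ : μ ≠ 0) : ¬ IsUncontrollableMode f b μ := by
  rintro ⟨w, hw0, hwf, hwb⟩
  have hw : (f - b ∘ₗ g).dualMap w = μ • w := by
    rw [dualMap_apply', comp_sub, hwf, ← comp_assoc, hwb, zero_comp, sub_zero]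
  have hdual : IsNilpotent (f - b ∘ₗ g).dualMap := by
    obtain ⟨k, hk⟩ := hg
    exact ⟨k, LinearMap.ext fun w => by rw [dualMap_pow_apply, hk, comp_zero]; rfl⟩
  have heig : Module.End.HasEigenvalue (f - b ∘ₗ g).dualMap μ :=
    Module.End.hasEigenvalue_of_hasEigenvector ⟨Module.End.mem_eigenspace_iff.mpr hw, hw0⟩
  exact hμ (heig.isNilpotent_of_isNilpotent hdual).eq_zero

lemma exists_pow_apply_mem [IsAlgClosed K] [FiniteDimensional K V] {R : Submodule K V}
    (hfR : ∀ x ∈ R, f x ∈ R) (hbR : range b ≤ R) (hPBH : ∀ μ ≠ 0, ¬ IsUncontrollableMode f b μ) :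
    ∃ d, ∀ x, (f ^ d) x ∈ R := by
  have hR : ∀ w ∈ R.dualAnnihilator, f.dualMap w ∈ R.dualAnnihilator := fun w hw =>
    (Submodule.mem_dualAnnihilator _).mpr fun x hx =>
      (Submodule.mem_dualAnnihilator _).mp hw _ (hfR x hx)
  have hnil : IsNilpotent (f.dualMap.restrict hR) := by
    refine Module.End.isNilpotent_of_forall_hasEigenvalue (K := K) (V := R.dualAnnihilator) _
      fun μ hμ => ?_
    by_contra hμ0
    obtain ⟨w, hw⟩ := hμ.exists_hasEigenvector
    refine hPBH μ hμ0 ⟨w, fun h => hw.2 (Subtype.ext h), ?_, ?_⟩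
    · exact congrArg Subtype.val (Module.End.mem_eigenspace_iff.mp hw.1)
    · exact LinearMap.ext fun u => (Submodule.mem_dualAnnihilator _).mp w.2 _ (hbR ⟨u, rfl⟩)
  obtain ⟨d, hd⟩ := hnil
  refine ⟨d, fun x => ?_⟩
  rw [← Subspace.forall_mem_dualAnnihilator_apply_eq_zero_iff]
  intro w hw
  have h := congrArg Subtype.val (LinearMap.congr_fun hd ⟨w, hw⟩)
  rw [Module.End.pow_restrict, restrict_apply] at h
  simpa [dualMap_pow_apply] using congr_fun (congrArg DFunLike.coe h) x

lemma exists_nullControllable_eq_top [IsAlgClosed K] [FiniteDimensional K V]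
    (hPBH : ∀ μ ≠ 0, ¬ IsUncontrollableMode f b μ) : ∃ r, nullControllable f b r = ⊤ := by
  obtain ⟨s, hs⟩ := exists_reachable_stable f b
  have hsucc := hs (s + 1) s.le_succ
  have hfR : ∀ x ∈ reachable f b s, f x ∈ reachable f b s := fun x hx =>
    hsucc ▸ map_reachable_le f b s ⟨x, hx, rfl⟩
  have hbR : range b ≤ reachable f b s :=
    hsucc ▸ (range_le_reachable_one f b).trans (reachable_mono f b (Nat.le_add_left 1 s))
  obtain ⟨d, hd⟩ := exists_pow_apply_mem f b hfR hbR hPBH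
  refine ⟨s + d, eq_top_iff.mpr fun x _ => ?_⟩
  rw [nullControllable, Submodule.mem_comap, ← hs (s + d) (Nat.le_add_right s d), pow_add,
    Module.End.mul_apply]
  exact Module.End.pow_apply_mem_of_forall_mem s hfR _ (hd x)

theorem exists_isNilpotent_sub_comp_iff [IsAlgClosed K] [FiniteDimensional K V] :
    (∃ g : V →ₗ[K] U, IsNilpotent (f - b ∘ₗ g)) ↔ ∀ μ ≠ 0, ¬ IsUncontrollableMode f b μ := by
  refine ⟨fun ⟨g, hg⟩ μ hμ => not_isUncontrollableMode_of_isNilpotent f b hg hμ, fun hPBH => ?_⟩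
  obtain ⟨r, hr⟩ := exists_nullControllable_eq_top f b hPBH
  exact exists_isNilpotent_sub_comp_of_chain f b (nullControllable_zero f b)
    (nullControllable_mono f b) (map_nullControllable_succ_le f b) hr

end Modes

end LinearControl

open Matrix

section Matrices

variable {K m n : Type*} [Field K] [Fintype m] [DecidableEq m] [Fintype n] [DecidableEq n]

lemma Matrix.isNilpotent_iff_pow_card_eq_zero {M : Matrix n n K} :
    IsNilpotent M ↔ M ^ Fintype.card n = 0 := by
  refine ⟨fun hM => ?_, fun h => ⟨_, h⟩⟩
  have h := (isNilpotent_charpoly_sub_pow_of_isNilpotent hM).eq_zero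
  rw [sub_eq_zero] at h
  simpa [h] using M.aeval_self_charpoly

lemma Matrix.dotProductEquiv_comp_toLin' (A : Matrix n m K) (w : n → K) :
    dotProductEquiv K n w ∘ₗ toLin' A = dotProductEquiv K m (w ᵥ* A) :=
  LinearMap.ext fun x => dotProduct_mulVec w A x

lemma LinearControl.isUncontrollableMode_toLin'_iff (A : Matrix n n K) (B : Matrix n m K) (μ : K) :
    IsUncontrollableMode (toLin' A) (toLin' B) μ ↔
      ∃ w : n → K, w ≠ 0 ∧ w ᵥ* A = μ • w ∧ w ᵥ* B = 0 := by
  constructor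
  · rintro ⟨φ, hφ0, hφA, hφB⟩
    obtain ⟨w, rfl⟩ := (dotProductEquiv K n).surjective φ
    refine ⟨w, by simpa using hφ0, (dotProductEquiv K n).injective ?_,
      (dotProductEquiv K m).injective ?_⟩
    · rw [← dotProductEquiv_comp_toLin', hφA, map_smul]
    · rw [← dotProductEquiv_comp_toLin', hφB, map_zero]
  · rintro ⟨w, hw0, hwA, hwB⟩
    refine ⟨dotProductEquiv K n w, by simpa using hw0, ?_, ?_⟩
    · rw [dotProductEquiv_comp_toLin', hwA, map_smul]
    · rw [dotProductEquiv_comp_toLin', hwB, map_zero]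

end Matrices

/-- There is a deadbeat gain `K` (i.e. `A - BK` nilpotent) iff the
Popov–Belevitch–Hautus condition holds for every nonzero `λ`. -/
theorem stmt_11 {n m : ℕ} (A : Matrix (Fin n) (Fin n) ℂ) (B : Matrix (Fin n) (Fin m) ℂ) :
    (∃ K : Matrix (Fin m) (Fin n) ℂ, (A - B * K) ^ n = 0) ↔
      ∀ lam : ℂ, lam ≠ 0 →
        ¬∃ w : Fin n → ℂ, w ≠ 0 ∧ w ᵥ* A = lam • w ∧ w ᵥ* B = 0 := by
  simp_rw [← LinearControl.isUncontrollableMode_toLin'_iff,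
    ← LinearControl.exists_isNilpotent_sub_comp_iff, toLin'.surjective.exists, ← toLin'_mul,
    ← map_sub, isNilpotent_toLin'_iff, isNilpotent_iff_pow_card_eq_zero, Fintype.card_fin]
end

section
/- Suppose Assumptions 1 and 2 hold, with p ≥ 1 as in Assumption 1. Fix x, x̂ ∈ X, let φ(k,x) := f^k(x) denote the solution of x⁺ = f(x), and let ψ : ℕ → X be any sequence with ψ(0) = x̂ and ψ(k+1) ∈ f([ψ(k)]_0 ∩ [φ(k,x)]^-_{π(ψ(k),φ(k,x))}) for all k ∈ ℕ (in particular, for every such pair the set {j ∈ {2−p,…,0,1} : [ψ(k)]_0 ∩ [φ(k,x)]_j^- ≠ ∅} defining π is nonempty, so π and the tracker are well defined). Then ψ(k) = φ(k,x) for all k ≥ p. -/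
/-- The classes `[x]_{-k}` of the paper: `[x]_0 = μ(x,U)` and
`[x]_{-k-1} = μ([x]_{-k}^-, U)` where `[x]_{-k}^- = f⁻¹([f(x)]_{-k})`. -/
def cls {X U : Type*} (f : X → X) (μ : X → U → X) : ℕ → X → Set X
  | 0, x => Set.range (μ x)
  | k + 1, x => ⋃ y ∈ f ⁻¹' cls f μ k (f x), Set.range (μ y)

/-- The classes `[x]_{-k}^- = f⁻¹([f(x)]_{-k})` of the paper. -/
def clsm {X U : Type*} (f : X → X) (μ : X → U → X) (k : ℕ) (x : X) : Set X :=
  f ⁻¹' cls f μ k (f x)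

/-- The classes `[x]_j^-` for integer indices `j ≤ 1`: `[x]_1^- = {x}` and,
for `j ≤ 0`, `[x]_j^- = [x]_{-(-j)}^-`. -/
def clsI {X U : Type*} (f : X → X) (μ : X → U → X) (j : ℤ) (x : X) : Set X :=
  if j = 1 then {x} else clsm f μ (-j).toNat x

/-- The map `π(x̂,x) = max { j ∈ {2-p,…,0,1} : [x̂]_0 ∩ [x]_j^- ≠ ∅ }`. -/
noncomputable def piMap {X U : Type*} (f : X → X) (μ : X → U → X) (p : ℕ)
    (xhat x : X) : ℤ :=
  sSup {j : ℤ | 2 - (p : ℤ) ≤ j ∧ j ≤ 1 ∧ (cls f μ 0 xhat ∩ clsI f μ j x).Nonempty}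

/-!
If `z ∈ [x]_j^-` then `f z ∈ [f x]_{min(j,0)}`, and by Assumption 2 a point of `[y]_{-n-1}` has its
`0`-class meeting `[y]_{-n}^-`. Hence along the tracker the index `π(ψ(k), φ(k,x))` grows by
one at each step until it reaches `1`; Assumption 1 makes it at least `2 - p` at `k = 0`. So
`π(ψ(k), φ(k,x)) = 1` for `k ≥ p - 1`, and then `[φ(k,x)]_1^- = {φ(k,x)}` forces
`ψ(k+1) = f(φ(k,x))`.
-/

section Tracker

variable {X U : Type*} {f : X → X} {μ : X → U → X}

theorem clsI_one (x : X) : clsI f μ 1 x = {x} := if_pos rfl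

theorem clsI_of_ne_one {j : ℤ} (hj : j ≠ 1) (x : X) : clsI f μ j x = clsm f μ (-j).toNat x :=
  if_neg hj

theorem apply_mem_cls_of_mem_clsI (hμ : ∀ x : X, x ∈ Set.range (μ x)) {j : ℤ} {x z : X}
    (hz : z ∈ clsI f μ j x) : f z ∈ cls f μ (-j).toNat (f x) := by
  by_cases hj : j = 1
  · subst hj
    rw [clsI_one, Set.mem_singleton_iff] at hz
    subst hz
    exact hμ (f z)
  · rw [clsI_of_ne_one hj] at hz
    exact hz

theorem cls_zero_inter_clsI_nonempty (hμ : ∀ x : X, x ∈ Set.range (μ x))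
    (hA2 : ∀ x xhat : X, xhat ∈ cls f μ 0 x → cls f μ 0 xhat = cls f μ 0 x)
    {n : ℕ} {y z : X} (hz : z ∈ cls f μ n y) :
    (cls f μ 0 z ∩ clsI f μ (1 - n) y).Nonempty := by
  cases n with
  | zero => exact ⟨y, by rw [hA2 y z hz]; exact hμ y, by simp [clsI_one]⟩
  | succ m =>
    obtain ⟨w, hw, hzw⟩ : ∃ w ∈ clsm f μ m y, z ∈ cls f μ 0 w := by
      simpa [cls, clsm] using hz
    refine ⟨w, by rw [hA2 w z hzw]; exact hμ w, ?_⟩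
    rw [clsI_of_ne_one (by omega)]
    simpa using hw

/-- The set whose supremum is `π(x̂,x)`. -/
def piCandidates (f : X → X) (μ : X → U → X) (p : ℕ) (xhat x : X) : Set ℤ :=
  {j : ℤ | 2 - (p : ℤ) ≤ j ∧ j ≤ 1 ∧ (cls f μ 0 xhat ∩ clsI f μ j x).Nonempty}

variable {p : ℕ} {xhat x : X}

theorem le_piMap {j : ℤ} (hj : j ∈ piCandidates f μ p xhat x) : j ≤ piMap f μ p xhat x :=
  le_csSup ⟨1, fun _ hi => hi.2.1⟩ hj

theorem piMap_mem_piCandidates (hne : (piCandidates f μ p xhat x).Nonempty) :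
    piMap f μ p xhat x ∈ piCandidates f μ p xhat x :=
  Int.csSup_mem hne ⟨1, fun _ hi => hi.2.1⟩

theorem one_sub_toNat_neg_piMap_mem_piCandidates (hμ : ∀ x : X, x ∈ Set.range (μ x))
    (hA2 : ∀ x xhat : X, xhat ∈ cls f μ 0 x → cls f μ 0 xhat = cls f μ 0 x)
    {xhat' : X} (hne : (piCandidates f μ p xhat x).Nonempty)
    (h : xhat' ∈ f '' (cls f μ 0 xhat ∩ clsI f μ (piMap f μ p xhat x) x)) :
    1 - ((-piMap f μ p xhat x).toNat : ℤ) ∈ piCandidates f μ p xhat' (f x) := by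
  obtain ⟨z, ⟨-, hz⟩, rfl⟩ := h
  obtain ⟨hπ_ge, hπ_le, -⟩ := piMap_mem_piCandidates hne
  exact ⟨by omega, by omega,
    cls_zero_inter_clsI_nonempty hμ hA2 (apply_mem_cls_of_mem_clsI hμ hz)⟩

theorem exists_piCandidates_tracker_ge (hμ : ∀ x : X, x ∈ Set.range (μ x)) (hp : 1 ≤ p)
    (hA1 : ∀ x : X, cls f μ (p - 1) x = Set.univ)
    (hA2 : ∀ x xhat : X, xhat ∈ cls f μ 0 x → cls f μ 0 xhat = cls f μ 0 x)
    {ψ : ℕ → X}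
    (hψ : ∀ k : ℕ, ψ (k + 1) ∈
      f '' (cls f μ 0 (ψ k) ∩ clsI f μ (piMap f μ p (ψ k) (f^[k] x)) (f^[k] x)))
    (k : ℕ) : ∃ j ∈ piCandidates f μ p (ψ k) (f^[k] x), min (2 - (p : ℤ) + k) 1 ≤ j := by
  induction k with
  | zero =>
    have hψ0 : ψ 0 ∈ cls f μ (p - 1) x := hA1 x ▸ Set.mem_univ _
    have hne := cls_zero_inter_clsI_nonempty hμ hA2 hψ0
    rw [show 1 - ((p - 1 : ℕ) : ℤ) = 2 - p by omega] at hne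
    exact ⟨2 - p, ⟨le_rfl, by omega, hne⟩, by simp⟩
  | succ k ih =>
    obtain ⟨j, hj, hjk⟩ := ih
    rw [Function.iterate_succ_apply']
    refine ⟨_, one_sub_toNat_neg_piMap_mem_piCandidates hμ hA2 ⟨j, hj⟩
      (hψ k), ?_⟩
    have := le_piMap hj
    push_cast
    omega

end Tracker

theorem stmt_12_general {X U : Type*} (f : X → X) (μ : X → U → X)
    (hμ : ∀ x : X, x ∈ Set.range (μ x))
    (p : ℕ) (hp : 1 ≤ p)
    (hA1 : ∀ x : X, cls f μ (p - 1) x = Set.univ)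
    (hA2 : ∀ x xhat : X, xhat ∈ cls f μ 0 x → cls f μ 0 xhat = cls f μ 0 x)
    (x xhat : X) (ψ : ℕ → X)
    (hψ : ∀ k : ℕ, ψ (k + 1) ∈
      f '' (cls f μ 0 (ψ k) ∩ clsI f μ (piMap f μ p (ψ k) (f^[k] x)) (f^[k] x))) :
    ∀ k : ℕ, p ≤ k → ψ k = f^[k] x := by
  intro k hk
  obtain ⟨m, rfl⟩ : ∃ m, k = m + 1 := ⟨k - 1, by omega⟩
  obtain ⟨j, hj, hjm⟩ := exists_piCandidates_tracker_ge hμ hp hA1 hA2 hψ m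
  have hπ : piMap f μ p (ψ m) (f^[m] x) = 1 :=
    le_antisymm (piMap_mem_piCandidates ⟨j, hj⟩).2.1 (by have := le_piMap hj; omega)
  obtain ⟨z, ⟨-, hz⟩, hψz⟩ := hψ m
  rw [hπ, clsI_one, Set.mem_singleton_iff] at hz
  rw [Function.iterate_succ_apply', ← hψz, hz]

/-- Main theorem: under Assumptions 1 and 2, any solution `ψ` of the tracker
`x̂⁺ ∈ f([x̂]_0 ∩ [x]^-_{π(x̂,x)})` coupled with `x⁺ = f(x)` (solution `φ(k,x) = f^k(x)`)
satisfies `ψ(k) = φ(k,x)` for all `k ≥ p`. -/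
theorem stmt_12 {X U : Type*} [Nonempty X] [Nonempty U] (f : X → X) (μ : X → U → X)
    (hμ : ∀ x : X, x ∈ Set.range (μ x))
    (p : ℕ) (hp : 1 ≤ p)
    (hA1 : ∀ x : X, cls f μ (p - 1) x = Set.univ)
    (hA2 : ∀ x xhat : X, xhat ∈ cls f μ 0 x → cls f μ 0 xhat = cls f μ 0 x)
    (x xhat : X) (ψ : ℕ → X) (hψ0 : ψ 0 = xhat)
    (hψ : ∀ k : ℕ, ψ (k + 1) ∈
      f '' (cls f μ 0 (ψ k) ∩ clsI f μ (piMap f μ p (ψ k) (f^[k] x)) (f^[k] x))) :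
    ∀ k : ℕ, p ≤ k → ψ k = f^[k] x :=
  stmt_12_general f μ hμ p hp hA1 hA2 x xhat ψ hψ
end

section
/- Suppose Assumptions 1 and 2 hold, with p ≥ 1 as in Assumption 1. Let ℓ ∈ {0,1,…,p−2} and x, x̂ ∈ X with x̂ ∈ [x]_{-ℓ-1}. Then [x̂]_0 ∩ [x]^-_{-ℓ} ≠ ∅, hence π(x̂,x) ≥ −ℓ, and every point x̂⁺ ∈ f([x̂]_0 ∩ [x]^-_{π(x̂,x)}) satisfies x̂⁺ ∈ [f(x)]_{-ℓ}. -/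
/-!
A point `y` with `x̂ ∈ μ(y,U)` and `y ∈ [x]_{-ℓ}^-` lies in `[x̂]_0` by Assumption 2, which gives
the nonempty intersection and hence `π(x̂,x) ≥ -ℓ`. The classes `[x]_{-k}` grow with `k`, so
`f([x]_j^-) ⊆ [f(x)]_{-ℓ}` for every `j ≥ -ℓ`, in particular for `j = π(x̂,x)`.
-/

section Classes

variable {X U : Type*} (f : X → X) (μ : X → U → X)

lemma mem_cls_self (hμ : ∀ x : X, x ∈ Set.range (μ x)) (k : ℕ) (x : X) : x ∈ cls f μ k x := by
  induction k generalizing x with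
  | zero => exact hμ x
  | succ k ih => exact Set.mem_biUnion (ih (f x)) (hμ x)

lemma cls_subset_cls_succ (hμ : ∀ x : X, x ∈ Set.range (μ x)) (k : ℕ) (x : X) :
    cls f μ k x ⊆ cls f μ (k + 1) x := by
  induction k generalizing x with
  | zero => exact fun w hw => Set.mem_biUnion (mem_cls_self f μ hμ 0 (f x)) hw
  | succ k ih =>
    intro w hw
    obtain ⟨y, hy, hwy⟩ := Set.mem_iUnion₂.mp hw
    exact Set.mem_biUnion (ih (f x) hy) hwy

lemma cls_mono (hμ : ∀ x : X, x ∈ Set.range (μ x)) : Monotone (cls f μ) :=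
  monotone_nat_of_le_succ fun k x => cls_subset_cls_succ f μ hμ k x

lemma clsI_neg_natCast (ℓ : ℕ) (x : X) : clsI f μ (-(ℓ : ℤ)) x = clsm f μ ℓ x := by
  have hne : -(ℓ : ℤ) ≠ 1 := by omega
  simp [clsI, hne]

lemma image_clsI_subset_cls (hμ : ∀ x : X, x ∈ Set.range (μ x)) {ℓ : ℕ} {j : ℤ}
    (hj : -(ℓ : ℤ) ≤ j) (x : X) : f '' clsI f μ j x ⊆ cls f μ ℓ (f x) := by
  unfold clsI
  split_ifs
  · simpa using mem_cls_self f μ hμ ℓ (f x)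
  · rintro _ ⟨z, hz, rfl⟩
    exact cls_mono f μ hμ (by omega : (-j).toNat ≤ ℓ) (f x) hz

lemma cls_zero_inter_clsm_nonempty (hμ : ∀ x : X, x ∈ Set.range (μ x))
    (hA2 : ∀ x xhat : X, xhat ∈ cls f μ 0 x → cls f μ 0 xhat = cls f μ 0 x)
    {ℓ : ℕ} {x xhat : X} (hxhat : xhat ∈ cls f μ (ℓ + 1) x) :
    (cls f μ 0 xhat ∩ clsm f μ ℓ x).Nonempty := by
  obtain ⟨y, hy, hxhat_y⟩ := Set.mem_iUnion₂.mp hxhat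
  exact ⟨y, hA2 y xhat hxhat_y ▸ hμ y, hy⟩

lemma le_piMap_s13 {p : ℕ} {j : ℤ} {xhat x : X} (hp : 2 - (p : ℤ) ≤ j) (h1 : j ≤ 1)
    (hne : (cls f μ 0 xhat ∩ clsI f μ j x).Nonempty) : j ≤ piMap f μ p xhat x :=
  le_csSup ⟨1, fun _ hi => hi.2.1⟩ ⟨hp, h1, hne⟩

end Classes

theorem stmt_13_general {X U : Type*} (f : X → X) (μ : X → U → X)
    (hμ : ∀ x : X, x ∈ Set.range (μ x))
    (p : ℕ)
    (hA2 : ∀ x xhat : X, xhat ∈ cls f μ 0 x → cls f μ 0 xhat = cls f μ 0 x)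
    (ℓ : ℕ) (hℓ : ℓ + 2 ≤ p) (x xhat : X) (hxhat : xhat ∈ cls f μ (ℓ + 1) x) :
    (cls f μ 0 xhat ∩ clsm f μ ℓ x).Nonempty ∧
      -(ℓ : ℤ) ≤ piMap f μ p xhat x ∧
      ∀ xhatp ∈ f '' (cls f μ 0 xhat ∩ clsI f μ (piMap f μ p xhat x) x),
        xhatp ∈ cls f μ ℓ (f x) := by
  have hne := cls_zero_inter_clsm_nonempty f μ hμ hA2 hxhat
  have hπ : -(ℓ : ℤ) ≤ piMap f μ p xhat x :=
    le_piMap_s13 f μ (by omega) (by omega) (by rwa [clsI_neg_natCast])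
  exact ⟨hne, hπ, fun _ h =>
    image_clsI_subset_cls f μ hμ hπ x (Set.image_mono Set.inter_subset_right h)⟩

/-- The key claim: under Assumptions 1 and 2, if `ℓ ∈ {0,…,p-2}` and `x̂ ∈ [x]_{-ℓ-1}`,
then `[x̂]_0 ∩ [x]^-_{-ℓ} ≠ ∅`, hence `π(x̂,x) ≥ -ℓ`, and every
`x̂⁺ ∈ f([x̂]_0 ∩ [x]^-_{π(x̂,x)})` lies in `[f(x)]_{-ℓ}`. -/
theorem stmt_13 {X U : Type*} [Nonempty X] [Nonempty U] (f : X → X) (μ : X → U → X)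
    (hμ : ∀ x : X, x ∈ Set.range (μ x))
    (p : ℕ) (hp : 1 ≤ p)
    (hA1 : ∀ x : X, cls f μ (p - 1) x = Set.univ)
    (hA2 : ∀ x xhat : X, xhat ∈ cls f μ 0 x → cls f μ 0 xhat = cls f μ 0 x)
    (ℓ : ℕ) (hℓ : ℓ + 2 ≤ p) (x xhat : X) (hxhat : xhat ∈ cls f μ (ℓ + 1) x) :
    (cls f μ 0 xhat ∩ clsm f μ ℓ x).Nonempty ∧
      -(ℓ : ℤ) ≤ piMap f μ p xhat x ∧
      ∀ xhatp ∈ f '' (cls f μ 0 xhat ∩ clsI f μ (piMap f μ p xhat x) x),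
        xhatp ∈ cls f μ ℓ (f x) :=
  stmt_13_general f μ hμ p hA2 ℓ hℓ x xhat hxhat
end

section
/- Suppose the map μ satisfies x ∈ μ(x,U) for all x, and Assumption 2 holds. Let ℓ ≥ 0 and x, x̂ ∈ X with x̂ ∈ [x]_{-ℓ-1}. Then there exists η ∈ [x̂]_0 ∩ [x]^-_{-ℓ}; in particular [x̂]_0 ∩ [x]^-_{-ℓ} is nonempty. -/
theorem mem_cls_succ_iff {X U : Type*} (f : X → X) (μ : X → U → X) (k : ℕ) (x z : X) :
    z ∈ cls f μ (k + 1) x ↔ ∃ y ∈ clsm f μ k x, z ∈ cls f μ 0 y := by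
  simp [cls, clsm]

theorem stmt_14_general {X U : Type*} (f : X → X) (μ : X → U → X)
    (hμ : ∀ x : X, x ∈ Set.range (μ x))
    (hA2 : ∀ x xhat : X, xhat ∈ cls f μ 0 x → cls f μ 0 xhat = cls f μ 0 x)
    (ℓ : ℕ) (x xhat : X) (hxhat : xhat ∈ cls f μ (ℓ + 1) x) :
    (∃ η : X, η ∈ cls f μ 0 xhat ∩ clsm f μ ℓ x) ∧
      (cls f μ 0 xhat ∩ clsm f μ ℓ x).Nonempty := by
  obtain ⟨y, hy, hxhat_y⟩ := (mem_cls_succ_iff f μ ℓ x xhat).1 hxhat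
  have hy_xhat : y ∈ cls f μ 0 xhat := hA2 y xhat hxhat_y ▸ hμ y
  exact ⟨⟨y, hy_xhat, hy⟩, ⟨y, hy_xhat, hy⟩⟩

/-- If `x ∈ μ(x,U)` for all `x`, Assumption 2 holds, and `x̂ ∈ [x]_{-ℓ-1}`, then there
exists `η ∈ [x̂]_0 ∩ [x]^-_{-ℓ}`; in particular `[x̂]_0 ∩ [x]^-_{-ℓ}` is nonempty. -/
theorem stmt_14 {X U : Type*} [Nonempty X] [Nonempty U] (f : X → X) (μ : X → U → X)
    (hμ : ∀ x : X, x ∈ Set.range (μ x))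
    (hA2 : ∀ x xhat : X, xhat ∈ cls f μ 0 x → cls f μ 0 xhat = cls f μ 0 x)
    (ℓ : ℕ) (x xhat : X) (hxhat : xhat ∈ cls f μ (ℓ + 1) x) :
    (∃ η : X, η ∈ cls f μ 0 xhat ∩ clsm f μ ℓ x) ∧
      (cls f μ 0 xhat ∩ clsm f μ ℓ x).Nonempty :=
  stmt_14_general f μ hμ hA2 ℓ x xhat hxhat
end
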